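/- Let q be a nonzero complex number that is not a root of unity, and let m and l be positive integers with m ≥ l. Then ∑_{i=0}^{min(l, m-l)} (-1)^i q^{-i} [m-i]_q! / ([i]_q! [l-i]_q! [m-l-i]_q!) = q^{l(m-l)}. Equivalently, ∑_{i=0}^{min(l, m-l)} (-1)^i q^{-i} [l choose i]_q [m-i choose l]_q = q^{l(m-l)}. -/

import Mathlib

open scoped BigOperators

/-- The `q`-integer `[r]_q = (q^r - q^{-r})/(q - q⁻¹)`. -/
noncomputable def qint (q : ℂ) (r : ℤ) : ℂ := (q ^ r - q ^ (-r)) / (q - q⁻¹)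

/-- The `q`-factorial `[r]_q! = ∏_{s=1}^r [s]_q`. -/
noncomputable def qfact (q : ℂ) (r : ℕ) : ℂ := ∏ s ∈ Finset.range r, qint q ((s : ℤ) + 1)

/-- The `q`-binomial coefficient `[r choose s]_q`. -/
noncomputable def qbinom (q : ℂ) (r s : ℕ) : ℂ := qfact q r / (qfact q s * qfact q (r - s))

/-- `q` is not a root of unity. -/
def NotRootOfUnity (q : ℂ) : Prop := ∀ k : ℕ, 0 < k → q ^ k ≠ 1

/-!
Multiply the sum by `[l]! (q - q⁻¹)^l`. With `[l]! = [l choose i] [i]! [l-i]!` the `i`-th term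
becomes `[l choose i]` times `∏_{j<l} (q^(m-i-j) - q^(-(m-i-j)))`, which the `q`-binomial theorem
`∏_{j<l} (1 + q^(2j) x) = ∑_k [l choose k] q^(k(l-1)) x^k` expands in powers of `q^(2i)`.
Exchanging the two sums, the `q`-binomial theorem applies once more: the `k`-th inner sum is
`∏_{j<l} (1 - q^(2(j+k-l)))`, which vanishes for `1 ≤ k ≤ l`. Only `k = 0` survives, and it is
`q^(l(m-l))` times the same expansion of `[l]! (q - q⁻¹)^l`.
-/

open Finset

theorem prod_zpow_eq_zpow_sum {G₀ ι : Type*} [CommGroupWithZero G₀] {x : G₀} (hx : x ≠ 0)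
    (s : Finset ι) (f : ι → ℤ) : ∏ i ∈ s, x ^ f i = x ^ ∑ i ∈ s, f i := by
  induction s using Finset.cons_induction with
  | empty => simp
  | cons i s hi ih => rw [prod_cons, sum_cons, ih, zpow_add₀ hx]

theorem sum_mul_sum_mul_pow_comm {R : Type*} [CommSemiring R] (c : ℕ → R) (s : Finset ℕ)
    (z w y : R) :
    ∑ i ∈ s, c i * z ^ i * ∑ k ∈ s, c k * (w * y ^ i) ^ k =
      ∑ k ∈ s, c k * w ^ k * ∑ i ∈ s, c i * (z * y ^ k) ^ i := by
  simp_rw [mul_sum]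
  rw [sum_comm]
  refine sum_congr rfl fun k _ => sum_congr rfl fun i _ => ?_
  rw [mul_pow, mul_pow, ← pow_mul, ← pow_mul, mul_comm i k]
  ring

section

variable {q : ℂ}

theorem NotRootOfUnity.zpow_ne_one (h : NotRootOfUnity q) {n : ℤ} (hn : n ≠ 0) : q ^ n ≠ 1 := by
  obtain ⟨k, rfl | rfl⟩ := Int.eq_nat_or_neg n
  · exact_mod_cast h k (by omega)
  · rw [zpow_neg, inv_ne_one]
    exact_mod_cast h k (by omega)

theorem zpow_sub_zpow_neg_ne_zero (hq : q ≠ 0) (h : NotRootOfUnity q) {n : ℤ} (hn : n ≠ 0) :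
    q ^ n - q ^ (-n) ≠ 0 := by
  have hsplit : q ^ n - q ^ (-n) = q ^ (-n) * (q ^ (2 * n) - 1) := by
    rw [mul_sub, ← zpow_add₀ hq]; ring_nf
  rw [hsplit]
  exact mul_ne_zero (zpow_ne_zero _ hq) (sub_ne_zero.2 (h.zpow_ne_one (by omega)))

theorem sub_inv_ne_zero (hq : q ≠ 0) (h : NotRootOfUnity q) : q - q⁻¹ ≠ 0 := by
  simpa using zpow_sub_zpow_neg_ne_zero hq h one_ne_zero

theorem qint_ne_zero (hq : q ≠ 0) (h : NotRootOfUnity q) {r : ℤ} (hr : r ≠ 0) : qint q r ≠ 0 :=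
  div_ne_zero (zpow_sub_zpow_neg_ne_zero hq h hr) (sub_inv_ne_zero hq h)

theorem qfact_ne_zero (hq : q ≠ 0) (h : NotRootOfUnity q) (n : ℕ) : qfact q n ≠ 0 :=
  prod_ne_zero_iff.2 fun s _ => qint_ne_zero hq h (by omega)

@[simp]
theorem qint_zero : qint q 0 = 0 := by simp [qint]

theorem qint_add (hq : q ≠ 0) (a b : ℤ) :
    qint q (a + b) = q ^ (-b) * qint q a + q ^ a * qint q b := by
  simp only [qint, neg_add, zpow_add₀ hq, zpow_neg]
  ring

theorem qint_mul_sub_inv (hD : q - q⁻¹ ≠ 0) (r : ℤ) : qint q r * (q - q⁻¹) = q ^ r - q ^ (-r) :=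
  div_mul_cancel₀ _ hD

theorem qfact_succ (n : ℕ) : qfact q (n + 1) = qfact q n * qint q ((n : ℤ) + 1) :=
  prod_range_succ _ _

/-- The symmetric `q`-binomial coefficient, defined by the `q`-Pascal rule rather than as the
quotient `qbinom`, so that it needs no nonvanishing hypothesis. -/
noncomputable def qchoose (q : ℂ) : ℕ → ℕ → ℂ
  | _, 0 => 1
  | 0, _ + 1 => 0
  | n + 1, k + 1 => q ^ (-((k : ℤ) + 1)) * qchoose q n (k + 1) + q ^ ((n : ℤ) - k) * qchoose q n k

@[simp]
theorem qchoose_zero_right (n : ℕ) : qchoose q n 0 = 1 := by cases n <;> rfl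

theorem qchoose_succ_succ (n k : ℕ) : qchoose q (n + 1) (k + 1) =
    q ^ (-((k : ℤ) + 1)) * qchoose q n (k + 1) + q ^ ((n : ℤ) - k) * qchoose q n k := rfl

theorem qchoose_eq_zero_of_lt : ∀ {n k : ℕ}, n < k → qchoose q n k = 0
  | 0, _ + 1, _ => rfl
  | n + 1, k + 1, h => by
    rw [qchoose_succ_succ, qchoose_eq_zero_of_lt (by omega), qchoose_eq_zero_of_lt (by omega)]
    ring

@[simp]
theorem qchoose_self : ∀ n : ℕ, qchoose q n n = 1
  | 0 => rfl
  | n + 1 => by simp [qchoose_succ_succ, qchoose_eq_zero_of_lt, qchoose_self n]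

theorem qchoose_add_mul_qfact_mul_qfact (hq : q ≠ 0) :
    ∀ a b : ℕ, qchoose q (a + b) a * qfact q a * qfact q b = qfact q (a + b)
  | 0, b => by simp [qfact]
  | a + 1, 0 => by simp [qfact]
  | a + 1, b + 1 => by
    have h₁ := qchoose_add_mul_qfact_mul_qfact hq (a + 1) b
    have h₂ := qchoose_add_mul_qfact_mul_qfact hq a (b + 1)
    have hint := qint_add hq ((b : ℤ) + 1) ((a : ℤ) + 1)
    rw [show a + (b + 1) = a + 1 + b by omega, qfact_succ b] at h₂
    rw [qfact_succ a] at h₁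
    rw [show a + 1 + (b + 1) = a + 1 + b + 1 by omega, qchoose_succ_succ, qfact_succ (a + 1 + b),
      qfact_succ a, qfact_succ b, show ((a + 1 + b : ℕ) : ℤ) - a = b + 1 by push_cast; ring]
    push_cast at hint ⊢
    rw [show (b : ℤ) + 1 + (a + 1) = a + 1 + b + 1 by ring] at hint
    linear_combination q ^ (-((a : ℤ) + 1)) * qint q (b + 1) * h₁
      + q ^ ((b : ℤ) + 1) * qint q (a + 1) * h₂ - qfact q (a + 1 + b) * hint
  termination_by a b => a + b

theorem qchoose_succ_succ_mul_zpow (hq : q ≠ 0) (l k : ℕ) :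
    qchoose q (l + 1) (k + 1) * q ^ (((k + 1 : ℕ) : ℤ) * ((l + 1 : ℕ) - 1)) =
      qchoose q l (k + 1) * q ^ (((k + 1 : ℕ) : ℤ) * (l - 1)) +
        q ^ (2 * l) * (qchoose q l k * q ^ ((k : ℤ) * (l - 1))) := by
  have h₁ : q ^ (-((k : ℤ) + 1)) * q ^ (((k + 1 : ℕ) : ℤ) * ((l + 1 : ℕ) - 1)) =
      q ^ (((k + 1 : ℕ) : ℤ) * (l - 1)) := by
    rw [← zpow_add₀ hq]; push_cast; ring_nf
  have h₂ : q ^ ((l : ℤ) - k) * q ^ (((k + 1 : ℕ) : ℤ) * ((l + 1 : ℕ) - 1)) =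
      q ^ (2 * l) * q ^ ((k : ℤ) * (l - 1)) := by
    rw [← zpow_natCast, ← zpow_add₀ hq, ← zpow_add₀ hq]; push_cast; ring_nf
  rw [qchoose_succ_succ]
  linear_combination qchoose q l (k + 1) * h₁ + qchoose q l k * h₂

theorem prod_one_add_mul_eq_sum_qchoose (hq : q ≠ 0) (l : ℕ) (x : ℂ) :
    ∏ j ∈ range l, (1 + q ^ (2 * j) * x) =
      ∑ k ∈ range (l + 1), qchoose q l k * q ^ ((k : ℤ) * (l - 1)) * x ^ k := by
  induction l with
  | zero => simp
  | succ l ih =>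
    have hshift : ∑ k ∈ range (l + 1), qchoose q l (k + 1) * q ^ (((k + 1 : ℕ) : ℤ) * (l - 1)) *
        x ^ (k + 1) = ∑ k ∈ range (l + 1), qchoose q l k * q ^ ((k : ℤ) * (l - 1)) * x ^ k - 1 := by
      have h := sum_range_succ' (fun k => qchoose q l k * q ^ ((k : ℤ) * (l - 1)) * x ^ k) (l + 1)
      rw [sum_range_succ, qchoose_eq_zero_of_lt (Nat.lt_succ_self l)] at h
      simp only [qchoose_zero_right, Nat.cast_zero, zero_mul, zpow_zero, pow_zero, mul_one] at h
      linear_combination -h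
    have hmul : ∑ k ∈ range (l + 1), q ^ (2 * l) * (qchoose q l k * q ^ ((k : ℤ) * (l - 1))) *
        x ^ (k + 1) = (∑ k ∈ range (l + 1), qchoose q l k * q ^ ((k : ℤ) * (l - 1)) * x ^ k) *
          (q ^ (2 * l) * x) := by
      rw [sum_mul]
      exact sum_congr rfl fun k _ => by ring
    rw [prod_range_succ, ih, sum_range_succ' _ (l + 1)]
    simp only [qchoose_succ_succ_mul_zpow hq, add_mul, sum_add_distrib, hshift, hmul]
    simp only [qchoose_zero_right, Nat.cast_zero, Nat.cast_add, Nat.cast_one, add_sub_cancel_right,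
      zero_mul, zpow_zero, pow_zero, mul_one]
    ring

noncomputable def qdescFactorial (q : ℂ) (a : ℤ) (l : ℕ) : ℂ := ∏ j ∈ range l, qint q (a - j)

theorem qfact_eq_qfact_mul_qdescFactorial {n l : ℕ} (h : l ≤ n) :
    qfact q n = qfact q (n - l) * qdescFactorial q n l := by
  induction l with
  | zero => simp [qdescFactorial]
  | succ l ih =>
    rw [ih (by omega), qdescFactorial, qdescFactorial, prod_range_succ,
      show n - l = n - (l + 1) + 1 by omega, qfact_succ,
      show ((n - (l + 1) : ℕ) : ℤ) + 1 = n - l by omega]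
    ring

theorem qfact_eq_qdescFactorial (n : ℕ) : qfact q n = qdescFactorial q n n := by
  simpa [qfact] using qfact_eq_qfact_mul_qdescFactorial (q := q) le_rfl

theorem qdescFactorial_eq_zero {a : ℤ} {l : ℕ} (h₀ : 0 ≤ a) (hl : a < l) :
    qdescFactorial q a l = 0 :=
  prod_eq_zero (i := a.toNat) (mem_range.2 (by omega)) (by simp [h₀])

theorem sub_inv_pow_mul_qdescFactorial (hq : q ≠ 0) (hD : q - q⁻¹ ≠ 0) (a : ℤ) (l : ℕ) :
    (q - q⁻¹) ^ l * qdescFactorial q a l =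
      q ^ (∑ j ∈ range l, (a - j)) * ∏ j ∈ range l, (1 + q ^ (2 * j) * -q ^ (-(2 * a))) := by
  have hfactor (j : ℕ) : qint q (a - j) * (q - q⁻¹) =
      q ^ (a - j) * (1 + q ^ (2 * j) * -q ^ (-(2 * a))) := by
    rw [qint_mul_sub_inv hD, ← zpow_natCast]
    simp only [mul_add, mul_one, mul_neg, ← zpow_add₀ hq]
    push_cast
    ring_nf
  rw [← prod_zpow_eq_zpow_sum hq, ← prod_mul_distrib, ← prod_congr rfl fun j _ => hfactor j,
    prod_mul_distrib, prod_const, card_range, qdescFactorial, mul_comm]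

theorem sub_inv_pow_mul_qdescFactorial_sub (hq : q ≠ 0) (hD : q - q⁻¹ ≠ 0) (m : ℤ) (l i : ℕ) :
    (-1) ^ i * q ^ (-(i : ℤ)) * ((q - q⁻¹) ^ l * qdescFactorial q (m - i) l) =
      q ^ (∑ j ∈ range l, (m - j)) * (q ^ ((i : ℤ) * (l - 1)) * (-q ^ (-(2 * (l : ℤ)))) ^ i *
        ∏ j ∈ range l, (1 + q ^ (2 * j) * (-q ^ (-(2 * m)) * (q ^ 2) ^ i))) := by
  have hx : -q ^ (-(2 * (m - i))) = -q ^ (-(2 * m)) * (q ^ 2) ^ i := by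
    rw [← pow_mul, ← zpow_natCast, neg_mul, ← zpow_add₀ hq]
    push_cast
    ring_nf
  have hS : ∑ j ∈ range l, (m - i - j) = ∑ j ∈ range l, (m - j) - l * i := by
    simp only [sub_right_comm _ (i : ℤ), sum_sub_distrib, sum_const, card_range, nsmul_eq_mul]
  have hpow : (-1) ^ i * q ^ (-(i : ℤ)) * q ^ (∑ j ∈ range l, (m - j) - l * i) =
      q ^ (∑ j ∈ range l, (m - j)) * (q ^ ((i : ℤ) * (l - 1)) * (-q ^ (-(2 * (l : ℤ)))) ^ i) := by
    rw [neg_pow (q ^ _), ← zpow_natCast (q ^ _), ← zpow_mul]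
    simp only [mul_assoc, mul_left_comm _ ((-1 : ℂ) ^ i), ← zpow_add₀ hq]
    ring_nf
  rw [sub_inv_pow_mul_qdescFactorial hq hD, hx, hS]
  linear_combination (∏ j ∈ range l, (1 + q ^ (2 * j) * (-q ^ (-(2 * m)) * (q ^ 2) ^ i))) * hpow

theorem prod_one_add_mul_neg_zpow_mul_pow_eq_zero (hq : q ≠ 0) {k l : ℕ} (hk : 0 < k)
    (hkl : k ≤ l) :
    ∏ j ∈ range l, (1 + q ^ (2 * j) * (-q ^ (-(2 * (l : ℤ))) * (q ^ 2) ^ k)) = 0 := by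
  refine prod_eq_zero (i := l - k) (mem_range.2 (by omega)) ?_
  have hpow : q ^ (2 * (l - k)) * (q ^ 2) ^ k = q ^ (2 * l) := by
    rw [← pow_mul, ← pow_add]
    congr 1
    omega
  rw [zpow_neg, show (2 * (l : ℤ)) = ((2 * l : ℕ) : ℤ) by push_cast; ring, zpow_natCast, ← hpow]
  field_simp
  ring

theorem sub_inv_pow_mul_sum_qchoose_mul_qdescFactorial (hq : q ≠ 0) (hD : q - q⁻¹ ≠ 0)
    (m : ℤ) (l : ℕ) :
    (q - q⁻¹) ^ l * ∑ i ∈ range (l + 1),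
        (-1) ^ i * q ^ (-(i : ℤ)) * qchoose q l i * qdescFactorial q (m - i) l =
      q ^ (∑ j ∈ range l, (m - j)) * ∏ j ∈ range l, (1 + q ^ (2 * j) * -q ^ (-(2 * (l : ℤ)))) := by
  set c : ℕ → ℂ := fun k => qchoose q l k * q ^ ((k : ℤ) * (l - 1))
  set z : ℂ := -q ^ (-(2 * (l : ℤ)))
  set w : ℂ := -q ^ (-(2 * m))
  have hgauss (x : ℂ) : ∏ j ∈ range l, (1 + q ^ (2 * j) * x) = ∑ k ∈ range (l + 1), c k * x ^ k :=
    prod_one_add_mul_eq_sum_qchoose hq l x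
  calc (q - q⁻¹) ^ l * ∑ i ∈ range (l + 1),
        (-1) ^ i * q ^ (-(i : ℤ)) * qchoose q l i * qdescFactorial q (m - i) l
      = q ^ (∑ j ∈ range l, (m - j)) *
          ∑ i ∈ range (l + 1), c i * z ^ i * ∑ k ∈ range (l + 1), c k * (w * (q ^ 2) ^ i) ^ k := by
        rw [mul_sum, mul_sum]
        refine sum_congr rfl fun i _ => ?_
        rw [← hgauss]
        linear_combination qchoose q l i * sub_inv_pow_mul_qdescFactorial_sub hq hD m l i
    _ = q ^ (∑ j ∈ range l, (m - j)) *
          ∑ k ∈ range (l + 1),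
            c k * w ^ k * ∏ j ∈ range l, (1 + q ^ (2 * j) * (z * (q ^ 2) ^ k)) := by
        rw [sum_mul_sum_mul_pow_comm]
        simp_rw [← hgauss]
    _ = q ^ (∑ j ∈ range l, (m - j)) * ∏ j ∈ range l, (1 + q ^ (2 * j) * z) := by
        congr 1
        rw [sum_eq_single_of_mem 0 (by simp)]
        · simp [c]
        · intro k hk hk0
          rw [prod_one_add_mul_neg_zpow_mul_pow_eq_zero hq (Nat.pos_of_ne_zero hk0)
            (Nat.lt_succ_iff.1 (mem_range.1 hk)), mul_zero]

theorem prod_one_add_mul_neg_zpow_ne_zero (hq : q ≠ 0) (h : NotRootOfUnity q) (l : ℕ) :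
    ∏ j ∈ range l, (1 + q ^ (2 * j) * -q ^ (-(2 * (l : ℤ)))) ≠ 0 := by
  refine prod_ne_zero_iff.2 fun j hj => ?_
  have hne : q ^ (2 * (j : ℤ) - 2 * l) ≠ 1 := h.zpow_ne_one (by have := mem_range.1 hj; omega)
  rw [mul_neg, ← zpow_natCast, ← zpow_add₀ hq, ← sub_eq_add_neg]
  push_cast
  exact sub_ne_zero.2 hne.symm

theorem sum_qfact_div_mul_qfact (hq : q ≠ 0) (h : NotRootOfUnity q) {m l : ℕ} (hml : l ≤ m) :
    (∑ i ∈ range (min l (m - l) + 1), (-1 : ℂ) ^ i * q ^ (-(i : ℤ)) * qfact q (m - i) /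
        (qfact q i * qfact q (l - i) * qfact q (m - l - i))) * qfact q l =
      ∑ i ∈ range (l + 1), (-1) ^ i * q ^ (-(i : ℤ)) * qchoose q l i *
        qdescFactorial q ((m : ℤ) - i) l := by
  rw [sum_mul, ← sum_subset (s₂ := range (l + 1))
    (range_subset_range.2 (Nat.succ_le_succ (min_le_left l (m - l))))]
  · refine sum_congr rfl fun i hi => ?_
    have hil : i ≤ min l (m - l) := Nat.lt_succ_iff.1 (mem_range.1 hi)
    obtain ⟨b, rfl⟩ := Nat.exists_eq_add_of_le (hil.trans (min_le_left _ _))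
    have hdesc := qfact_eq_qfact_mul_qdescFactorial (q := q) (show i + b ≤ m - i by omega)
    rw [Nat.cast_sub (by omega : i ≤ m)] at hdesc
    rw [show m - (i + b) - i = m - i - (i + b) by omega, show i + b - i = b by omega,
      ← qchoose_add_mul_qfact_mul_qfact hq, hdesc]
    have := qfact_ne_zero hq h i
    have := qfact_ne_zero hq h b
    have := qfact_ne_zero hq h (m - i - (i + b))
    field_simp
  · intro i hi hi'
    simp only [mem_range] at hi hi'
    rw [qdescFactorial_eq_zero (by omega) (by omega), mul_zero]

end

theorem qIdentity_general (q : ℂ) (hq : q ≠ 0) (hq' : NotRootOfUnity q)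
    (m l : ℕ) (hml : l ≤ m) :
    (∑ i ∈ Finset.range (min l (m - l) + 1),
        (-1 : ℂ) ^ i * q ^ (-(i : ℤ)) * qfact q (m - i) /
          (qfact q i * qfact q (l - i) * qfact q (m - l - i)))
      = q ^ ((l : ℤ) * ((m : ℤ) - (l : ℤ))) := by
  have hD := sub_inv_ne_zero hq hq'
  have hsum := sub_inv_pow_mul_sum_qchoose_mul_qdescFactorial hq hD m l
  have hfact := sub_inv_pow_mul_qdescFactorial hq hD l l
  rw [← qfact_eq_qdescFactorial] at hfact
  rw [← sum_qfact_div_mul_qfact hq hq' hml] at hsum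
  have hexp : ∑ j ∈ range l, ((m : ℤ) - j) = l * (m - l) + ∑ j ∈ range l, ((l : ℤ) - j) := by
    simp only [sum_sub_distrib, sum_const, card_range, nsmul_eq_mul]
    ring
  rw [hexp, zpow_add₀ hq] at hsum
  refine mul_right_cancel₀ (mul_ne_zero (pow_ne_zero l hD) (qfact_ne_zero hq hq' l)) ?_
  linear_combination hsum - q ^ ((l : ℤ) * ((m : ℤ) - (l : ℤ))) * hfact

/-- Theorem 2.1: the `q`-identity
`∑_{i=0}^{min(l,m-l)} (-1)^i q^{-i} [m-i]_q!/([i]_q![l-i]_q![m-l-i]_q!) = q^{l(m-l)}`. -/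
theorem qIdentity (q : ℂ) (hq : q ≠ 0) (hq' : NotRootOfUnity q)
    (m l : ℕ) (hm : 0 < m) (hl : 0 < l) (hml : l ≤ m) :
    (∑ i ∈ Finset.range (min l (m - l) + 1),
        (-1 : ℂ) ^ i * q ^ (-(i : ℤ)) * qfact q (m - i) /
          (qfact q i * qfact q (l - i) * qfact q (m - l - i)))
      = q ^ ((l : ℤ) * ((m : ℤ) - (l : ℤ))) :=
  qIdentity_general q hq hq' m l hml
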